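/- arXiv:1701.05414 — 4 statements merged into one kernel-verified Lean document; each statement's English description precedes it below -/
import Mathlib

section
/- For natural numbers n, u, v with 1 ≤ u ≤ n-1 and 0 ≤ v ≤ 2(n-u), the number of quadruples (p,r,k,q) of natural numbers satisfying 0 ≤ p,r ≤ n-1, 0 ≤ k,q ≤ n-1-p-r, k+q = v, p+r = u-1 and p+r < n-1 equals u·(v+1) if v ≤ n-u, and equals u·(2(n-u)-v+1) if v > n-u. -/
open Finset

def boundedAntidiagonal (A m : ℕ) : Finset (ℕ × ℕ) :=
  (antidiagonal m).filter fun x => x.1 ≤ A ∧ x.2 ≤ A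

lemma boundedAntidiagonal_eq_image (A m : ℕ) :
    boundedAntidiagonal A m = (Icc (m - A) (min m A)).image fun i => (i, m - i) := by
  ext ⟨i, j⟩
  simp only [boundedAntidiagonal, mem_filter, HasAntidiagonal.mem_antidiagonal, mem_image, mem_Icc,
    Prod.mk.injEq]
  constructor
  · rintro ⟨hsum, hi, hj⟩
    exact ⟨i, ⟨by omega, by omega⟩, rfl, by omega⟩
  · rintro ⟨i, hi, rfl, rfl⟩
    omega

lemma card_boundedAntidiagonal (A m : ℕ) :
    #(boundedAntidiagonal A m) = min m A + 1 - (m - A) := by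
  rw [boundedAntidiagonal_eq_image, card_image_of_injective _ fun i j h => congrArg Prod.fst h,
    Nat.card_Icc]

/-- counting the quadruples `(p,r,k,q)` with
`0 ≤ p,r ≤ n-1`, `0 ≤ k,q ≤ n-1-p-r`, `k+q = v`, `p+r = u-1` and `p+r < n-1`. -/
theorem count_quadruples (n u v : ℕ) (hu1 : 1 ≤ u) (hu2 : u ≤ n - 1)
    (hv : v ≤ 2 * (n - u)) :
    (((Finset.range n ×ˢ Finset.range n ×ˢ Finset.range n ×ˢ Finset.range n).filter
        (fun x : ℕ × ℕ × ℕ × ℕ =>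
          x.1 ≤ n - 1 ∧ x.2.1 ≤ n - 1 ∧
          x.2.2.1 ≤ n - 1 - x.1 - x.2.1 ∧ x.2.2.2 ≤ n - 1 - x.1 - x.2.1 ∧
          x.2.2.1 + x.2.2.2 = v ∧ x.1 + x.2.1 = u - 1 ∧ x.1 + x.2.1 < n - 1)).card)
      = (if v ≤ n - u then u * (v + 1) else u * (2 * (n - u) - v + 1)) := by
  -- Once `p + r = u - 1`, the bound on `k` and `q` is `n - u`, independent of `(p, r)`.
  have hsplit : (range n ×ˢ range n ×ˢ range n ×ˢ range n).filter
        (fun x : ℕ × ℕ × ℕ × ℕ =>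
          x.1 ≤ n - 1 ∧ x.2.1 ≤ n - 1 ∧
          x.2.2.1 ≤ n - 1 - x.1 - x.2.1 ∧ x.2.2.2 ≤ n - 1 - x.1 - x.2.1 ∧
          x.2.2.1 + x.2.2.2 = v ∧ x.1 + x.2.1 = u - 1 ∧ x.1 + x.2.1 < n - 1) =
      (boundedAntidiagonal (u - 1) (u - 1) ×ˢ boundedAntidiagonal (n - u) v).map
        (Equiv.prodAssoc ℕ ℕ (ℕ × ℕ)).toEmbedding := by
    ext ⟨p, r, k, q⟩
    simp only [boundedAntidiagonal, mem_filter, mem_product, mem_range, HasAntidiagonal.mem_antidiagonal,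
      mem_map_equiv, Equiv.prodAssoc_symm_apply]
    omega
  rw [hsplit, card_map, card_product, card_boundedAntidiagonal, card_boundedAntidiagonal]
  split_ifs <;> congr 1 <;> omega
end

section
/- For natural numbers n and u with 1 ≤ u ≤ n-1, define c(u,v) = u(v+1) for 0 ≤ v ≤ n-u and c(u,v) = u(2(n-u)-v+1) for n-u < v ≤ 2(n-u). Then the sum of c(u,v)² over v from 0 to 2(n-u) equals P_n(u) := (1/3)·u²·(n-u+1)·(2(n-u)² + 4(n-u) + 3). -/
/-- The counting constants `c(u,v)` from the paper. -/
def c (n u v : ℕ) : ℕ :=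
  if v ≤ n - u then u * (v + 1) else u * (2 * (n - u) - v + 1)

/-! `v ↦ c(u,v)` is `u` times a tent `1, 2, …, m + 1, m, …, 1` with `m = n - u`, so its squares
sum to `u²` times two sums of consecutive squares, `∑_{k ≤ m+1} k²` and `∑_{k ≤ m} k²`. -/

open Finset

theorem sum_range_succ_sq_mul_six {R : Type*} [CommSemiring R] (p : ℕ) :
    (∑ i ∈ range p, ((i : R) + 1) ^ 2) * 6 = (p : R) * (p + 1) * (2 * p + 1) := by
  induction p with
  | zero => simp
  | succ k ih =>
    rw [sum_range_succ, add_mul, ih]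
    push_cast
    ring

theorem sum_range_tent {M : Type*} [AddCommMonoid M] (f : ℕ → M) (m : ℕ) :
    ∑ v ∈ range (2 * m + 1), f (if v ≤ m then v + 1 else 2 * m - v + 1)
      = ∑ v ∈ range (m + 1), f (v + 1) + ∑ v ∈ range m, f (v + 1) := by
  rw [show 2 * m + 1 = (m + 1) + m by ring, sum_range_add]
  congr 1
  · exact sum_congr rfl fun v hv => by rw [if_pos (Nat.lt_succ_iff.mp (mem_range.mp hv))]
  · rw [← sum_range_reflect (fun v => f (v + 1)) m]
    refine sum_congr rfl fun v hv => ?_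
    have hv : v < m := mem_range.mp hv
    rw [if_neg (by omega)]
    congr 1
    omega

theorem sum_c_sq_general (n u : ℕ) :
    (∑ v ∈ Finset.range (2 * (n - u) + 1), ((c n u v : ℚ)) ^ 2)
      = (1 / 3) * (u : ℚ) ^ 2 * (((n - u : ℕ) : ℚ) + 1)
          * (2 * ((n - u : ℕ) : ℚ) ^ 2 + 4 * ((n - u : ℕ) : ℚ) + 3) := by
  set m := n - u
  have hsq_up := sum_range_succ_sq_mul_six (R := ℚ) (m + 1)
  have hsq_down := sum_range_succ_sq_mul_six (R := ℚ) m
  calc ∑ v ∈ range (2 * m + 1), ((c n u v : ℚ)) ^ 2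
      = ∑ v ∈ range (m + 1), ((u * (v + 1) : ℕ) : ℚ) ^ 2
          + ∑ v ∈ range m, ((u * (v + 1) : ℕ) : ℚ) ^ 2 := by
        simpa only [c, ← mul_ite] using sum_range_tent (fun k => ((u * k : ℕ) : ℚ) ^ 2) m
    _ = (u : ℚ) ^ 2 * (∑ v ∈ range (m + 1), ((v : ℚ) + 1) ^ 2
          + ∑ v ∈ range m, ((v : ℚ) + 1) ^ 2) := by
        rw [mul_add, mul_sum, mul_sum]
        congr 1 <;> exact sum_congr rfl fun v _ => by push_cast; ring
    _ = _ := by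
        push_cast at hsq_up
        linear_combination ((u : ℚ) ^ 2 / 6) * (hsq_up + hsq_down)

/-- `∑_{v=0}^{2(n-u)} c(u,v)² = P_n(u)`. -/
theorem sum_c_sq (n u : ℕ) (hu1 : 1 ≤ u) (hu2 : u ≤ n - 1) :
    (∑ v ∈ Finset.range (2 * (n - u) + 1), ((c n u v : ℚ)) ^ 2)
      = (1 / 3) * (u : ℚ) ^ 2 * (((n - u : ℕ) : ℚ) + 1)
          * (2 * ((n - u : ℕ) : ℚ) ^ 2 + 4 * ((n - u : ℕ) : ℚ) + 3) :=
  sum_c_sq_general n u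
end

section
/- Let f₁ ∈ L²(ℝ₊^{n₁}), f₂ ∈ L²(ℝ₊^{m₁}), g₁ ∈ L²(ℝ₊^{n₂}), g₂ ∈ L²(ℝ₊^{m₂}), and let p ≤ min(n₁,n₂), r ≤ min(m₁,m₂). Then the bicontraction of the elementary tensors satisfies (f₁ ⊗ f₂) ⌢_{p,r} (g₁ ⊗ g₂) = (f₁ ⌢_p g₁) ⊗ (g₂ ⌢_r f₂), where ⌢_p denotes the p-th nested contraction. -/
/-! When both arguments are elementary tensors, the integrand of the bicontraction is a product
of a function of the first `p` integration variables and a function of the last `r`, so by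
Fubini the integral over `ℝ₊^{p+r}` factors into two nested contractions. What remains is
matching coordinates: the reversal of the contracted variables is absorbed by the invariance of
an orthant integral under permutations of the coordinates. -/

open MeasureTheory

/-- The `p`-th nested contraction of `f ∈ L²(ℝ₊^{a+p})` and `g ∈ L²(ℝ₊^{p+b})`. -/
noncomputable def cont (a p b : ℕ) (f : (Fin (a + p) → ℝ) → ℂ) (g : (Fin (p + b) → ℝ) → ℂ) :
    (Fin (a + b) → ℝ) → ℂ := fun t =>
  ∫ s in Set.univ.pi (fun _ : Fin p => Set.Ici (0 : ℝ)),
    f (Fin.append (fun i => t (Fin.castAdd b i)) s) *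
    g (Fin.append (fun i : Fin p => s i.rev) (fun i => t (Fin.natAdd a i)))

/-- The `(p,r)`-bicontraction of `f ∈ L²(ℝ₊^{n₁}) ⊗ L²(ℝ₊^{m₁})` and
`g ∈ L²(ℝ₊^{n₂}) ⊗ L²(ℝ₊^{m₂})`, where `n₁ = a₁ + p`, `m₁ = r + b₁`,
`n₂ = p + a₂`, `m₂ = b₂ + r`. -/
noncomputable def bicont (a₁ p r b₁ a₂ b₂ : ℕ)
    (f : (Fin ((a₁ + p) + (r + b₁)) → ℝ) → ℂ)
    (g : (Fin ((p + a₂) + (b₂ + r)) → ℝ) → ℂ) :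
    (Fin ((a₁ + (a₂ + b₂)) + b₁) → ℝ) → ℂ := fun t =>
  ∫ z in Set.univ.pi (fun _ : Fin (p + r) => Set.Ici (0 : ℝ)),
    f (Fin.append
        (Fin.append (fun i => t (Fin.castAdd b₁ (Fin.castAdd (a₂ + b₂) i)))
          (fun i : Fin p => z (Fin.castAdd r i.rev)))
        (Fin.append (fun i : Fin r => z (Fin.natAdd p i))
          (fun i => t (Fin.natAdd (a₁ + (a₂ + b₂)) i)))) *
    g (fun j =>
        (Fin.append
          (Fin.append (fun i : Fin p => z (Fin.castAdd r i))
            (fun i => t (Fin.castAdd b₁ (Fin.natAdd a₁ i))))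
          (fun i : Fin r => z (Fin.natAdd p i.rev)))
        (Fin.cast (by omega : (p + a₂) + (b₂ + r) = (p + (a₂ + b₂)) + r) j))

open Set

namespace MeasurableEquiv

variable (α : Type*) [MeasurableSpace α]

def finAddPiEquivProd (m n : ℕ) : (Fin (m + n) → α) ≃ᵐ (Fin m → α) × (Fin n → α) :=
  (piCongrLeft (fun _ => α) finSumFinEquiv).symm.trans (sumPiEquivProdPi fun _ => α)

@[simp]
theorem finAddPiEquivProd_apply (m n : ℕ) (z : Fin (m + n) → α) :
    finAddPiEquivProd α m n z = (fun i => z (Fin.castAdd n i), fun j => z (Fin.natAdd m j)) :=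
  rfl

end MeasurableEquiv

section

variable {α : Type*} [MeasureSpace α] [SigmaFinite (volume : Measure α)]

theorem volume_measurePreserving_finAddPiEquivProd (m n : ℕ) :
    MeasurePreserving (MeasurableEquiv.finAddPiEquivProd α m n) volume volume :=
  (volume_measurePreserving_sumPiEquivProdPi _).comp
    (volume_measurePreserving_piCongrLeft _ finSumFinEquiv).symm

theorem setIntegral_univ_pi_comp_equiv {ι E : Type*} [Fintype ι] [NormedAddCommGroup E]
    [NormedSpace ℝ E] (e : ι ≃ ι) (s : Set α) (F : (ι → α) → E) :
    ∫ x in univ.pi fun _ => s, F (x ∘ e) = ∫ x in univ.pi fun _ => s, F x := by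
  set φ := MeasurableEquiv.piCongrLeft (fun _ : ι => α) e.symm
  have hφ : ⇑φ = (· ∘ e) := by
    ext x i
    simp [φ, MeasurableEquiv.coe_piCongrLeft, Equiv.piCongrLeft_apply_eq_cast]
  have hpre : φ ⁻¹' (univ.pi fun _ => s) = univ.pi fun _ => s := by
    ext x
    simp only [hφ, mem_preimage, mem_univ_pi, Function.comp_apply]
    exact e.forall_congr fun _ => Iff.rfl
  have h := (volume_measurePreserving_piCongrLeft _ e.symm).setIntegral_preimage_emb
    φ.measurableEmbedding F (univ.pi fun _ => s)
  rwa [hpre, hφ] at h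

theorem setIntegral_univ_pi_castAdd_mul_natAdd {𝕜 : Type*} [RCLike 𝕜] {m n : ℕ} (s : Set α)
    (F : (Fin m → α) → 𝕜) (G : (Fin n → α) → 𝕜) :
    ∫ z in univ.pi fun _ => s,
        F (fun i => z (Fin.castAdd n i)) * G (fun j => z (Fin.natAdd m j)) =
      (∫ x in univ.pi fun _ => s, F x) * ∫ y in univ.pi fun _ => s, G y := by
  have hpre : MeasurableEquiv.finAddPiEquivProd α m n ⁻¹'
      ((univ.pi fun _ => s) ×ˢ univ.pi fun _ => s) = univ.pi fun _ => s := by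
    ext z; simp [Fin.forall_fin_add]
  rw [← setIntegral_prod_mul, ← Measure.volume_eq_prod, ← hpre,
    ← (volume_measurePreserving_finAddPiEquivProd m n).setIntegral_preimage_emb
      (MeasurableEquiv.measurableEmbedding _)]
  rfl

end

theorem Fin.append_append_append_cast {β : Type*} {p a b r : ℕ} (A : Fin p → β)
    (B₁ : Fin a → β) (B₂ : Fin b → β) (C : Fin r → β) (h : p + a + (b + r) = p + (a + b) + r)
    (j : Fin (p + a + (b + r))) :
    Fin.append (Fin.append A (Fin.append B₁ B₂)) C (j.cast h) =
      Fin.append (Fin.append A B₁) (Fin.append B₂ C) j := by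
  simp only [Fin.append_assoc, Function.comp_apply]
  refine Fin.addCases (fun i => ?_) (fun i => ?_) j <;> simp

theorem cont_append (a p b : ℕ) (f : (Fin (a + p) → ℝ) → ℂ) (g : (Fin (p + b) → ℝ) → ℂ)
    (u : Fin a → ℝ) (v : Fin b → ℝ) :
    cont a p b f g (Fin.append u v) =
      ∫ s in univ.pi fun _ => Ici 0, f (Fin.append u (s ∘ Fin.rev)) * g (Fin.append s v) := by
  rw [← setIntegral_univ_pi_comp_equiv Fin.revPerm]
  simp only [cont, Fin.append_left, Fin.append_right, Function.comp_def, Fin.revPerm_apply,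
    Fin.rev_rev]

theorem bicont_tensor_general (a₁ p r b₁ a₂ b₂ : ℕ)
    (f₁ : (Fin (a₁ + p) → ℝ) → ℂ) (f₂ : (Fin (r + b₁) → ℝ) → ℂ)
    (g₁ : (Fin (p + a₂) → ℝ) → ℂ) (g₂ : (Fin (b₂ + r) → ℝ) → ℂ) :
    ∀ t, bicont a₁ p r b₁ a₂ b₂
        (fun v => f₁ (fun i => v (Fin.castAdd (r + b₁) i)) *
          f₂ (fun i => v (Fin.natAdd (a₁ + p) i)))
        (fun v => g₁ (fun i => v (Fin.castAdd (b₂ + r) i)) *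
          g₂ (fun i => v (Fin.natAdd (p + a₂) i))) t =
      cont a₁ p a₂ f₁ g₁
          (Fin.append (fun j : Fin a₁ => t (Fin.castAdd b₁ (Fin.castAdd (a₂ + b₂) j)))
            (fun j : Fin a₂ => t (Fin.castAdd b₁ (Fin.natAdd a₁ (Fin.castAdd b₂ j))))) *
        cont b₂ r b₁ g₂ f₂
          (Fin.append (fun j : Fin b₂ => t (Fin.castAdd b₁ (Fin.natAdd a₁ (Fin.natAdd a₂ j))))
            (fun j : Fin b₁ => t (Fin.natAdd (a₁ + (a₂ + b₂)) j))) := by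
  intro t
  rw [cont_append, cont_append, ← setIntegral_univ_pi_castAdd_mul_natAdd]
  have hsplit : (fun i : Fin (a₂ + b₂) => t (Fin.castAdd b₁ (Fin.natAdd a₁ i))) =
      Fin.append (fun j => t (Fin.castAdd b₁ (Fin.natAdd a₁ (Fin.castAdd b₂ j))))
        (fun j => t (Fin.castAdd b₁ (Fin.natAdd a₁ (Fin.natAdd a₂ j)))) :=
    Fin.append_castAdd_natAdd.symm
  simp only [bicont, hsplit, Fin.append_append_append_cast, Fin.append_left, Fin.append_right,
    Function.comp_def]
  congr 1
  funext z
  ring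

/-- on elementary tensors, the `(p,r)`-bicontraction factorizes as
`(f₁ ⊗ f₂) ⌢_{p,r} (g₁ ⊗ g₂) = (f₁ ⌢_p g₁) ⊗ (g₂ ⌢_r f₂)`. -/
theorem bicont_tensor (a₁ p r b₁ a₂ b₂ : ℕ)
    (f₁ : (Fin (a₁ + p) → ℝ) → ℂ) (f₂ : (Fin (r + b₁) → ℝ) → ℂ)
    (g₁ : (Fin (p + a₂) → ℝ) → ℂ) (g₂ : (Fin (b₂ + r) → ℝ) → ℂ)
    (hf₁ : MemLp f₁ 2 ((volume : Measure (Fin (a₁ + p) → ℝ)).restrict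
      (Set.univ.pi fun _ => Set.Ici 0)))
    (hf₂ : MemLp f₂ 2 ((volume : Measure (Fin (r + b₁) → ℝ)).restrict
      (Set.univ.pi fun _ => Set.Ici 0)))
    (hg₁ : MemLp g₁ 2 ((volume : Measure (Fin (p + a₂) → ℝ)).restrict
      (Set.univ.pi fun _ => Set.Ici 0)))
    (hg₂ : MemLp g₂ 2 ((volume : Measure (Fin (b₂ + r) → ℝ)).restrict
      (Set.univ.pi fun _ => Set.Ici 0))) :
    ∀ t, bicont a₁ p r b₁ a₂ b₂
        (fun v => f₁ (fun i => v (Fin.castAdd (r + b₁) i)) *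
          f₂ (fun i => v (Fin.natAdd (a₁ + p) i)))
        (fun v => g₁ (fun i => v (Fin.castAdd (b₂ + r) i)) *
          g₂ (fun i => v (Fin.natAdd (p + a₂) i))) t =
      cont a₁ p a₂ f₁ g₁
          (Fin.append (fun j : Fin a₁ => t (Fin.castAdd b₁ (Fin.castAdd (a₂ + b₂) j)))
            (fun j : Fin a₂ => t (Fin.castAdd b₁ (Fin.natAdd a₁ (Fin.castAdd b₂ j))))) *
        cont b₂ r b₁ g₂ f₂
          (Fin.append (fun j : Fin b₂ => t (Fin.castAdd b₁ (Fin.natAdd a₁ (Fin.natAdd a₂ j))))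
            (fun j : Fin b₁ => t (Fin.natAdd (a₁ + (a₂ + b₂)) j))) :=
  bicont_tensor_general a₁ p r b₁ a₂ b₂ f₁ f₂ g₁ g₂
end

section
/- Divide [0,1] into N intervals I₁,…,I_N of length 1/N and set f_N(x₁,x₂,x₃) = √N · Σ_{k=1}^{N} 1_{I_k}(x₁)·1_{I_k}(x₃) (constant in x₂). Then f_N is mirror-symmetric, ‖f_N‖²_{L²([0,1]³)} = 1, and the contraction norms satisfy ‖f_N ⌢₁ f_N‖²_{L²([0,1]⁴)} + ‖f_N ⌢₂ f_N‖²_{L²([0,1]²)} = 2/N. -/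
open MeasureTheory

/-- The `p`-th nested contraction over `[0,1]` of `f ∈ L²([0,1]^{a+p})` and
`g ∈ L²([0,1]^{p+b})`. -/
noncomputable def cont01 (a p b : ℕ) (f : (Fin (a + p) → ℝ) → ℂ)
    (g : (Fin (p + b) → ℝ) → ℂ) : (Fin (a + b) → ℝ) → ℂ := fun t =>
  ∫ s in Set.univ.pi (fun _ : Fin p => Set.Icc (0 : ℝ) 1),
    f (Fin.append (fun i => t (Fin.castAdd b i)) s) *
    g (Fin.append (fun i : Fin p => s i.rev) (fun i => t (Fin.natAdd a i)))

/-- The kernel `f_N(x₁,x₂,x₃) = √N Σ_{k=1}^N 1_{I_k}(x₁) 1_{I_k}(x₃)` with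
`I_k = [(k−1)/N, k/N]`. -/
noncomputable def fN (N : ℕ) : (Fin 3 → ℝ) → ℂ := fun x =>
  (Real.sqrt N : ℂ) * ∑ k ∈ Finset.range N,
    Set.indicator (Set.Icc ((k : ℝ) / N) (((k : ℝ) + 1) / N)) (fun _ => (1 : ℂ)) (x 0) *
    Set.indicator (Set.Icc ((k : ℝ) / N) (((k : ℝ) + 1) / N)) (fun _ => (1 : ℂ)) (x 2)

/-! ### Auxiliary definitions and lemmas -/

/-- Real indicator of the `k`-th subinterval. -/
noncomputable def gg (N k : ℕ) : ℝ → ℝ :=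
  (Set.Icc ((k : ℝ) / N) (((k : ℝ) + 1) / N)).indicator (fun _ => 1)

lemma gg_mul (N j k : ℕ) (y : ℝ) :
    gg N j y * gg N k y =
      (Set.Icc (max ((j:ℝ)/N) ((k:ℝ)/N)) (min (((j:ℝ)+1)/N) (((k:ℝ)+1)/N))).indicator
        (fun _ => (1:ℝ)) y := by
  unfold gg
  rw [← Set.inter_indicator_mul, Set.Icc_inter_Icc]
  simp [Set.indicator_apply]

lemma gg_int (N j k : ℕ) :
    IntegrableOn (fun y => gg N j y * gg N k y) (Set.Icc (0:ℝ) 1) := by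
  simp only [gg_mul]
  exact ((integrableOn_const_iff (C := (1:ℝ))).2
    (Or.inr (by simp [Real.volume_Icc]))).indicator measurableSet_Icc

lemma gg_nonneg (N k : ℕ) (y : ℝ) : 0 ≤ gg N k y := by
  unfold gg
  exact Set.indicator_nonneg (fun _ _ => zero_le_one) y

lemma olapR (N j k : ℕ) (hN : 1 ≤ N) (hj : j < N) (hk : k < N) :
    ∫ y in Set.Icc (0:ℝ) 1, gg N j y * gg N k y = if j = k then (N:ℝ)⁻¹ else 0 := by
  have hN0 : (0:ℝ) < N := by exact_mod_cast hN
  simp_rw [gg_mul]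
  rw [MeasureTheory.setIntegral_indicator measurableSet_Icc]
  rw [Set.Icc_inter_Icc, setIntegral_const, measureReal_def, Real.volume_Icc, smul_eq_mul, mul_one]
  by_cases h : j = k
  · subst h
    have h1 : ((j:ℝ)+1)/N ≤ 1 := by
      rw [div_le_one hN0]; exact_mod_cast hj
    have h2 : (0:ℝ) ≤ (j:ℝ)/N := by positivity
    rw [if_pos rfl, min_self, max_self, min_eq_right h1, max_eq_right h2,
      div_sub_div_same, add_sub_cancel_left, ENNReal.toReal_ofReal (by positivity), one_div]
  · rw [if_neg h]
    have key : ∀ a b : ℕ, a < b →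
        min 1 (min (((a:ℝ)+1)/N) (((b:ℝ)+1)/N)) - max 0 (max ((a:ℝ)/N) ((b:ℝ)/N)) ≤ 0 := by
      intro a b hab
      have h1 : ((a:ℝ)+1)/N ≤ (b:ℝ)/N := by
        apply div_le_div_of_nonneg_right _ hN0.le
        exact_mod_cast hab
      have : min 1 (min (((a:ℝ)+1)/N) (((b:ℝ)+1)/N)) ≤ max 0 (max ((a:ℝ)/N) ((b:ℝ)/N)) :=
        le_trans (le_trans (min_le_right _ _) (le_trans (min_le_left _ _)
          (h1.trans (le_max_right _ _)))) (le_max_right _ _)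
      linarith
    have hle : min 1 (min (((j:ℝ)+1)/N) (((k:ℝ)+1)/N)) - max 0 (max ((j:ℝ)/N) ((k:ℝ)/N)) ≤ 0 := by
      rcases Nat.lt_or_ge j k with hlt | hge
      · exact key j k hlt
      · have hlt : k < j := by omega
        have := key k j hlt
        rwa [min_comm (((k:ℝ)+1)/N) (((j:ℝ)+1)/N), max_comm ((k:ℝ)/N) ((j:ℝ)/N)] at this
    rw [ENNReal.ofReal_eq_zero.2 hle, ENNReal.toReal_zero]

lemma int_one : ∫ y in Set.Icc (0:ℝ) 1, (1:ℝ) = 1 := by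
  rw [setIntegral_const, measureReal_def, Real.volume_Icc, smul_eq_mul, mul_one, sub_zero,
    ENNReal.toReal_ofReal zero_le_one]

section PiLemmas

variable {𝕜 : Type*} [RCLike 𝕜]

lemma indicator_pi_prod {n : ℕ} (h : Fin n → ℝ → 𝕜) (x : Fin n → ℝ) :
    (Set.univ.pi fun _ : Fin n => Set.Icc (0:ℝ) 1).indicator (fun x => ∏ i, h i (x i)) x
      = ∏ i, (Set.Icc (0:ℝ) 1).indicator (h i) (x i) := by
  by_cases hx : x ∈ Set.univ.pi fun _ : Fin n => Set.Icc (0:ℝ) 1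
  · rw [Set.indicator_of_mem hx]
    exact Finset.prod_congr rfl fun i _ =>
      (Set.indicator_of_mem (hx i (Set.mem_univ i)) _).symm
  · rw [Set.indicator_of_notMem hx]
    rw [Set.mem_pi] at hx
    push_neg at hx
    obtain ⟨i, -, hi⟩ := hx
    exact (Finset.prod_eq_zero (Finset.mem_univ i) (Set.indicator_of_notMem hi _)).symm

lemma lemA_int {n : ℕ} (h : Fin n → ℝ → 𝕜) (hi : ∀ i, IntegrableOn (h i) (Set.Icc 0 1)) :
    IntegrableOn (fun x => ∏ i, h i (x i))
      (Set.univ.pi fun _ : Fin n => Set.Icc (0:ℝ) 1) := by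
  rw [← integrable_indicator_iff (MeasurableSet.univ_pi fun _ => measurableSet_Icc)]
  rw [funext (indicator_pi_prod h)]
  exact Integrable.fintype_prod fun i =>
    (integrable_indicator_iff measurableSet_Icc).2 (hi i)

lemma lemA_val {n : ℕ} (h : Fin n → ℝ → 𝕜) :
    (∫ x in Set.univ.pi fun _ : Fin n => Set.Icc (0:ℝ) 1, ∏ i, h i (x i))
      = ∏ i, ∫ y in Set.Icc (0:ℝ) 1, h i y := by
  rw [← integral_indicator (MeasurableSet.univ_pi fun _ => measurableSet_Icc)]
  simp_rw [indicator_pi_prod h]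
  rw [MeasureTheory.integral_fintype_prod_volume_eq_prod]
  exact Finset.prod_congr rfl fun i _ => integral_indicator measurableSet_Icc

end PiLemmas

/-- The main double-sum overlap computation over a `n`-cube, with the kernel
depending on two distinct coordinates `a`, `b`. -/
lemma outer2 (N : ℕ) (hN : 1 ≤ N) {n : ℕ} (a b : Fin n) (hab : a ≠ b) :
    ∫ x in Set.univ.pi fun _ : Fin n => Set.Icc (0:ℝ) 1,
      (∑ k ∈ Finset.range N, gg N k (x a) * gg N k (x b)) ^ 2 = (N:ℝ)⁻¹ := by
  have hN0 : (N:ℝ) ≠ 0 := by positivity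
  set h : ℕ → ℕ → Fin n → ℝ → ℝ := fun j k i y =>
    (if i = a then gg N j y * gg N k y else 1) * (if i = b then gg N j y * gg N k y else 1)
    with hh
  have hpt : ∀ x : Fin n → ℝ,
      (∑ k ∈ Finset.range N, gg N k (x a) * gg N k (x b)) ^ 2
        = ∑ j ∈ Finset.range N, ∑ k ∈ Finset.range N, ∏ i, h j k i (x i) := by
    intro x
    rw [sq, Finset.sum_mul_sum]
    refine Finset.sum_congr rfl fun j _ => Finset.sum_congr rfl fun k _ => ?_
    simp only [hh, Finset.prod_mul_distrib, Finset.prod_ite_eq', Finset.mem_univ, if_pos]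
    ring
  have hint : ∀ j k, IntegrableOn (fun x : Fin n → ℝ => ∏ i, h j k i (x i))
      (Set.univ.pi fun _ : Fin n => Set.Icc (0:ℝ) 1) := by
    intro j k
    refine lemA_int _ fun i => ?_
    by_cases h1 : i = a
    · by_cases h2 : i = b
      · exact absurd (h1.symm.trans h2) hab
      · simp only [hh, if_pos h1, if_neg h2, mul_one]
        exact gg_int N j k
    · by_cases h2 : i = b
      · simp only [hh, if_pos h2, if_neg h1, one_mul]
        exact gg_int N j k
      · simp only [hh, if_neg h1, if_neg h2, mul_one]
        exact (integrableOn_const_iff (C := (1:ℝ))).2 (Or.inr (by simp [Real.volume_Icc]))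
  have hval : ∀ j k, j < N → k < N →
      (∫ x in Set.univ.pi fun _ : Fin n => Set.Icc (0:ℝ) 1, ∏ i, h j k i (x i))
        = (if j = k then (N:ℝ)⁻¹ else 0) * (if j = k then (N:ℝ)⁻¹ else 0) := by
    intro j k hj hk
    rw [lemA_val]
    have : ∀ i, (∫ y in Set.Icc (0:ℝ) 1, h j k i y)
        = (if i = a then (if j = k then (N:ℝ)⁻¹ else 0) else 1) *
          (if i = b then (if j = k then (N:ℝ)⁻¹ else 0) else 1) := by
      intro i
      by_cases h1 : i = a
      · by_cases h2 : i = b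
        · exact absurd (h1.symm.trans h2) hab
        · simp only [hh, if_pos h1, if_neg h2, mul_one]
          rw [olapR N j k hN hj hk]
      · by_cases h2 : i = b
        · simp only [hh, if_pos h2, if_neg h1, one_mul]
          rw [olapR N j k hN hj hk]
        · simp only [hh, if_neg h1, if_neg h2, mul_one]
          exact int_one
    simp only [this, Finset.prod_mul_distrib, Finset.prod_ite_eq', Finset.mem_univ, if_pos]
  calc ∫ x in Set.univ.pi fun _ : Fin n => Set.Icc (0:ℝ) 1,
        (∑ k ∈ Finset.range N, gg N k (x a) * gg N k (x b)) ^ 2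
      = ∫ x in Set.univ.pi fun _ : Fin n => Set.Icc (0:ℝ) 1,
        ∑ j ∈ Finset.range N, ∑ k ∈ Finset.range N, ∏ i, h j k i (x i) := by
        simp only [hpt]
    _ = ∑ j ∈ Finset.range N, ∫ x in Set.univ.pi fun _ : Fin n => Set.Icc (0:ℝ) 1,
        ∑ k ∈ Finset.range N, ∏ i, h j k i (x i) :=
        integral_finset_sum _ fun j _ => integrable_finset_sum _ fun k _ => hint j k
    _ = ∑ j ∈ Finset.range N, ∑ k ∈ Finset.range N,
        ∫ x in Set.univ.pi fun _ : Fin n => Set.Icc (0:ℝ) 1, ∏ i, h j k i (x i) :=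
        Finset.sum_congr rfl fun j _ => integral_finset_sum _ fun k _ => hint j k
    _ = ∑ j ∈ Finset.range N, ∑ k ∈ Finset.range N,
        (if j = k then (N:ℝ)⁻¹ else 0) * (if j = k then (N:ℝ)⁻¹ else 0) := by
        refine Finset.sum_congr rfl fun j hj => Finset.sum_congr rfl fun k hk => ?_
        exact hval j k (Finset.mem_range.1 hj) (Finset.mem_range.1 hk)
    _ = (N:ℝ)⁻¹ := by
        have : ∀ j k : ℕ, (if j = k then (N:ℝ)⁻¹ else 0) * (if j = k then (N:ℝ)⁻¹ else 0)
            = if j = k then (N:ℝ)⁻¹ * (N:ℝ)⁻¹ else 0 := by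
          intro j k; split_ifs <;> ring
        simp only [this, Finset.sum_ite_eq, Finset.mem_range]
        rw [Finset.sum_congr rfl fun j hj => if_pos (Finset.mem_range.1 hj)]
        rw [Finset.sum_const, Finset.card_range, nsmul_eq_mul]
        field_simp

/-- Real form of `fN`. -/
lemma fN_eq (N : ℕ) (x : Fin 3 → ℝ) :
    fN N x = ((Real.sqrt N * ∑ k ∈ Finset.range N, gg N k (x 0) * gg N k (x 2) : ℝ) : ℂ) := by
  have cast_ind : ∀ (s : Set ℝ) (y : ℝ),
      ((s.indicator (fun _ => (1:ℝ)) y : ℝ) : ℂ) = s.indicator (fun _ => (1:ℂ)) y := by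
    intro s y
    by_cases h : y ∈ s
    · simp [Set.indicator_of_mem h]
    · simp [Set.indicator_of_notMem h]
  simp only [fN, gg, Complex.ofReal_mul, Complex.ofReal_sum, cast_ind]

lemma norm_ofReal_sq (r : ℝ) : ‖((r:ℝ) : ℂ)‖ ^ 2 = r ^ 2 := by
  rw [Complex.norm_real, Real.norm_eq_abs, sq_abs]

lemma pi1_val (q : ℝ → ℝ) :
    (∫ s in Set.univ.pi fun _ : Fin 1 => Set.Icc (0:ℝ) 1, q (s 0))
      = ∫ y in Set.Icc (0:ℝ) 1, q y := by
  simpa using lemA_val (𝕜 := ℝ) (fun _ : Fin 1 => q)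

lemma pi1_int (q : ℝ → ℝ) (hq : IntegrableOn q (Set.Icc 0 1)) :
    IntegrableOn (fun s : Fin 1 → ℝ => q (s 0))
      (Set.univ.pi fun _ : Fin 1 => Set.Icc (0:ℝ) 1) := by
  simpa using lemA_int (𝕜 := ℝ) (fun _ : Fin 1 => q) (fun _ => hq)

lemma pi2_val (q : ℝ → ℝ) :
    (∫ s in Set.univ.pi fun _ : Fin 2 => Set.Icc (0:ℝ) 1, q (s 1))
      = ∫ y in Set.Icc (0:ℝ) 1, q y := by
  simpa [Fin.prod_univ_two, int_one] using lemA_val (𝕜 := ℝ) ![fun _ => (1:ℝ), q]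

lemma pi2_int (q : ℝ → ℝ) (hq : IntegrableOn q (Set.Icc 0 1)) :
    IntegrableOn (fun s : Fin 2 → ℝ => q (s 1))
      (Set.univ.pi fun _ : Fin 2 => Set.Icc (0:ℝ) 1) := by
  have h1 : IntegrableOn (fun _ : ℝ => (1:ℝ)) (Set.Icc (0:ℝ) 1) :=
    (integrableOn_const_iff (C := (1:ℝ))).2 (Or.inr (by simp [Real.volume_Icc]))
  have := lemA_int (𝕜 := ℝ) ![fun _ => (1:ℝ), q] (fun i => by fin_cases i <;> simpa)
  simpa [Fin.prod_univ_two] using this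

lemma inner_sum_eq (N : ℕ) (c d : ℕ → ℝ) (u : ℝ) :
    (Real.sqrt N * ∑ j ∈ Finset.range N, c j * gg N j u) *
    (Real.sqrt N * ∑ k ∈ Finset.range N, gg N k u * d k)
    = (N:ℝ) * ∑ j ∈ Finset.range N, ∑ k ∈ Finset.range N,
        c j * d k * (gg N j u * gg N k u) := by
  have h : (Real.sqrt N * ∑ j ∈ Finset.range N, c j * gg N j u) *
      (Real.sqrt N * ∑ k ∈ Finset.range N, gg N k u * d k)
      = (Real.sqrt N * Real.sqrt N) * ((∑ j ∈ Finset.range N, c j * gg N j u) *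
        ∑ k ∈ Finset.range N, gg N k u * d k) := by ring
  rw [h, Real.mul_self_sqrt (Nat.cast_nonneg N), Finset.sum_mul_sum]
  congr 1
  exact Finset.sum_congr rfl fun j _ => Finset.sum_congr rfl fun k _ => by ring

lemma innerGen {n : ℕ} (e : (Fin n → ℝ) → ℝ)
    (hval : ∀ q : ℝ → ℝ,
      (∫ s in Set.univ.pi fun _ : Fin n => Set.Icc (0:ℝ) 1, q (e s))
        = ∫ y in Set.Icc (0:ℝ) 1, q y)
    (hint : ∀ q : ℝ → ℝ, IntegrableOn q (Set.Icc 0 1) →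
      IntegrableOn (fun s => q (e s)) (Set.univ.pi fun _ : Fin n => Set.Icc (0:ℝ) 1))
    (N : ℕ) (hN : 1 ≤ N) (c d : ℕ → ℝ) :
    (∫ s in Set.univ.pi fun _ : Fin n => Set.Icc (0:ℝ) 1,
      (Real.sqrt N * ∑ j ∈ Finset.range N, c j * gg N j (e s)) *
      (Real.sqrt N * ∑ k ∈ Finset.range N, gg N k (e s) * d k))
      = ∑ k ∈ Finset.range N, c k * d k := by
  have hN0 : (N:ℝ) ≠ 0 := by positivity
  have hterm : ∀ j k, IntegrableOn (fun s => c j * d k * (gg N j (e s) * gg N k (e s)))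
      (Set.univ.pi fun _ : Fin n => Set.Icc (0:ℝ) 1) :=
    fun j k => (hint _ (gg_int N j k)).const_mul _
  simp only [inner_sum_eq]
  rw [integral_const_mul,
    integral_finset_sum _ (fun j _ => integrable_finset_sum _ fun k _ => hterm j k),
    Finset.mul_sum]
  refine Finset.sum_congr rfl fun j hj => ?_
  rw [integral_finset_sum _ fun k _ => hterm j k]
  have hkey : ∀ k ∈ Finset.range N,
      (∫ s in Set.univ.pi fun _ : Fin n => Set.Icc (0:ℝ) 1,
        c j * d k * (gg N j (e s) * gg N k (e s)))
        = if j = k then c j * d k * (N:ℝ)⁻¹ else 0 := by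
    intro k hk
    rw [integral_const_mul, hval (fun y => gg N j y * gg N k y),
      olapR N j k hN (Finset.mem_range.1 hj) (Finset.mem_range.1 hk)]
    split_ifs <;> ring
  rw [Finset.sum_congr rfl hkey, Finset.sum_ite_eq, if_pos hj]
  field_simp

/-- `f_N` is mirror-symmetric, has unit `L²([0,1]³)` norm, and its
contraction norms satisfy `‖f_N ⌢₁ f_N‖² + ‖f_N ⌢₂ f_N‖² = 2/N`. -/
theorem fN_properties (N : ℕ) (hN : 1 ≤ N) :
    (∀ x, fN N x = (starRingEnd ℂ) (fN N (fun i => x i.rev))) ∧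
    (∫ x in Set.univ.pi (fun _ : Fin 3 => Set.Icc (0 : ℝ) 1), ‖fN N x‖ ^ 2) = 1 ∧
    (∫ t in Set.univ.pi (fun _ : Fin 4 => Set.Icc (0 : ℝ) 1),
        ‖cont01 2 1 2 (fN N) (fN N) t‖ ^ 2) +
      (∫ t in Set.univ.pi (fun _ : Fin 2 => Set.Icc (0 : ℝ) 1),
        ‖cont01 1 2 1 (fN N) (fN N) t‖ ^ 2) = 2 / (N : ℝ) := by
  have hN0 : (N:ℝ) ≠ 0 := by positivity
  refine ⟨?_, ?_, ?_⟩
  · -- mirror symmetry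
    intro x
    have h0 : ((0 : Fin 3).rev) = 2 := rfl
    have h2 : ((2 : Fin 3).rev) = 0 := rfl
    simp only [fN, map_mul, map_sum, Complex.conj_ofReal, h0, h2,
      Set.indicator_apply, apply_ite (starRingEnd ℂ), map_one, map_zero]
    congr 1
    exact Finset.sum_congr rfl fun k _ => mul_comm _ _
  · -- unit norm
    have hpt : ∀ x : Fin 3 → ℝ, ‖fN N x‖ ^ 2
        = (N:ℝ) * (∑ k ∈ Finset.range N, gg N k (x 0) * gg N k (x 2)) ^ 2 := by
      intro x
      rw [fN_eq, norm_ofReal_sq, mul_pow, Real.sq_sqrt (Nat.cast_nonneg N)]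
    simp only [hpt]
    rw [integral_const_mul, outer2 N hN (0 : Fin 3) (2 : Fin 3) (by decide)]
    field_simp
  · -- contractions
    have hc1 : ∀ t : Fin 4 → ℝ, cont01 2 1 2 (fN N) (fN N) t
        = ((∑ k ∈ Finset.range N, gg N k (t 0) * gg N k (t 3) : ℝ) : ℂ) := by
      intro t
      have harg : ∀ s : Fin 1 → ℝ,
          fN N (Fin.append (fun i : Fin 2 => t (Fin.castAdd 2 i)) s) *
          fN N (Fin.append (fun i : Fin 1 => s i.rev) (fun i : Fin 2 => t (Fin.natAdd 2 i)))
          = (((Real.sqrt N * ∑ j ∈ Finset.range N, gg N j (t 0) * gg N j (s 0)) *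
              (Real.sqrt N * ∑ k ∈ Finset.range N, gg N k (s 0) * gg N k (t 3)) : ℝ) : ℂ) := by
        intro s
        rw [fN_eq, fN_eq, ← Complex.ofReal_mul]
        rfl
      simp only [cont01, harg]
      exact integral_ofReal.trans (congrArg _
        (innerGen (fun s : Fin 1 → ℝ => s 0) pi1_val pi1_int N hN
          (fun j => gg N j (t 0)) (fun k => gg N k (t 3))))
    have hc2 : ∀ t : Fin 2 → ℝ, cont01 1 2 1 (fN N) (fN N) t
        = ((∑ k ∈ Finset.range N, gg N k (t 0) * gg N k (t 1) : ℝ) : ℂ) := by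
      intro t
      have harg : ∀ s : Fin 2 → ℝ,
          fN N (Fin.append (fun i : Fin 1 => t (Fin.castAdd 1 i)) s) *
          fN N (Fin.append (fun i : Fin 2 => s i.rev) (fun i : Fin 1 => t (Fin.natAdd 1 i)))
          = (((Real.sqrt N * ∑ j ∈ Finset.range N, gg N j (t 0) * gg N j (s 1)) *
              (Real.sqrt N * ∑ k ∈ Finset.range N, gg N k (s 1) * gg N k (t 1)) : ℝ) : ℂ) := by
        intro s
        rw [fN_eq, fN_eq, ← Complex.ofReal_mul]
        rfl
      simp only [cont01, harg]
      exact integral_ofReal.trans (congrArg _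
        (innerGen (fun s : Fin 2 → ℝ => s 1) pi2_val pi2_int N hN
          (fun j => gg N j (t 0)) (fun k => gg N k (t 1))))
    have h1 : (∫ t in Set.univ.pi (fun _ : Fin 4 => Set.Icc (0 : ℝ) 1),
        ‖cont01 2 1 2 (fN N) (fN N) t‖ ^ 2) = (N:ℝ)⁻¹ := by
      simp only [hc1, norm_ofReal_sq]
      exact outer2 N hN (0 : Fin 4) 3 (by decide)
    have h2 : (∫ t in Set.univ.pi (fun _ : Fin 2 => Set.Icc (0 : ℝ) 1),
        ‖cont01 1 2 1 (fN N) (fN N) t‖ ^ 2) = (N:ℝ)⁻¹ := by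
      simp only [hc2, norm_ofReal_sq]
      exact outer2 N hN (0 : Fin 2) 1 (by decide)
    rw [h1, h2, div_eq_mul_inv]
    ring
end
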